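/- For every ε > 0, the orthogonal complement in ℂ²⊗ℂ² ≅ ℂ⁴ of the 3-dimensional subspace span{|00⟩ + |11⟩ + √2 ε|10⟩, |01⟩, |00⟩ − |11⟩} is the one-dimensional subspace spanned by ε|00⟩ + ε|11⟩ − √2|10⟩, and this vector is not a product vector; for ε = 0, the orthogonal complement of span{|00⟩ + |11⟩, |01⟩, |00⟩ − |11⟩} is spanned by the product vector |10⟩. -/

import Mathlib

noncomputable section

/-- Index set for two qubits: ℂ²⊗ℂ² ≅ ℂ⁴ with basis |00⟩,|01⟩,|10⟩,|11⟩. -/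
abbrev Q2 : Type := Fin 2 × Fin 2

/-- ℂ⁴ with its standard Hermitian inner product. -/
abbrev E4 : Type := EuclideanSpace ℂ Q2

/-- Computational basis vector |ij⟩. -/
def ketE (i j : Fin 2) : E4 := WithLp.toLp 2 (fun p : Q2 => if p = (i, j) then (1 : ℂ) else 0)

/-- ψ is a product vector if ψ = u ⊗ v. -/
def IsProductVecE (ψ : E4) : Prop := ∃ u v : Fin 2 → ℂ, ∀ p : Q2, ψ p = u p.1 * v p.2

lemma inner_expand (x y : E4) : (inner ℂ x y : ℂ) =
    (starRingEnd ℂ) (x (0,0)) * y (0,0) + (starRingEnd ℂ) (x (0,1)) * y (0,1) +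
    (starRingEnd ℂ) (x (1,0)) * y (1,0) + (starRingEnd ℂ) (x (1,1)) * y (1,1) := by
  simp [PiLp.inner_apply, RCLike.inner_apply, Fintype.sum_prod_type, Fin.sum_univ_two]
  ring

lemma mem_orth_triple (a b c v : E4) :
    v ∈ (Submodule.span ℂ ({a, b, c} : Set E4))ᗮ ↔
      (inner ℂ a v : ℂ) = 0 ∧ (inner ℂ b v : ℂ) = 0 ∧ (inner ℂ c v : ℂ) = 0 := by
  rw [Submodule.mem_orthogonal]
  constructor
  · intro h
    exact ⟨h a (Submodule.subset_span (by simp)), h b (Submodule.subset_span (by simp)),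
      h c (Submodule.subset_span (by simp))⟩
  · rintro ⟨h1, h2, h3⟩ u hu
    induction hu using Submodule.span_induction with
    | mem x hx => rcases hx with rfl | rfl | rfl <;> assumption
    | zero => simp
    | add x y _ _ hx hy => rw [inner_add_left, hx, hy, add_zero]
    | smul r x _ hx => rw [inner_smul_left, hx, mul_zero]

theorem orthogonal_complement_of_Veps :
    (∀ ε : ℝ, 0 < ε →
      (Submodule.span ℂ
          ({ketE 0 0 + ketE 1 1 + ((Real.sqrt 2 * ε : ℝ) : ℂ) • ketE 1 0, ketE 0 1,
            ketE 0 0 - ketE 1 1} : Set E4))ᗮ =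
        Submodule.span ℂ
          {(ε : ℂ) • ketE 0 0 + (ε : ℂ) • ketE 1 1 - (Real.sqrt 2 : ℂ) • ketE 1 0} ∧
      ¬ IsProductVecE
          ((ε : ℂ) • ketE 0 0 + (ε : ℂ) • ketE 1 1 - (Real.sqrt 2 : ℂ) • ketE 1 0)) ∧
    ((Submodule.span ℂ
        ({ketE 0 0 + ketE 1 1, ketE 0 1, ketE 0 0 - ketE 1 1} : Set E4))ᗮ =
      Submodule.span ℂ {ketE 1 0} ∧
      IsProductVecE (ketE 1 0)) := by
  have s2 : (Real.sqrt 2 : ℂ) * (Real.sqrt 2 : ℂ) = 2 := by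
    norm_cast
    rw [Real.mul_self_sqrt] <;> norm_num
  constructor
  · intro ε hε
    have hε' : (ε : ℂ) ≠ 0 := by exact_mod_cast ne_of_gt hε
    constructor
    · apply le_antisymm
      · intro v hv
        rw [mem_orth_triple] at hv
        obtain ⟨h1, h2, h3⟩ := hv
        simp only [inner_expand] at h1 h2 h3
        simp [ketE, Prod.ext_iff] at h1 h2 h3
        rw [Submodule.mem_span_singleton]
        have hd : v (1, 1) = v (0, 0) := by linear_combination -h3
        have hkey : v (1, 0) = -(Real.sqrt 2 : ℂ) * v (0, 0) / (ε : ℂ) := by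
          rw [eq_div_iff hε']
          linear_combination ((Real.sqrt 2 : ℂ) / 2) * h1 - ((Real.sqrt 2 : ℂ) / 2) * hd -
            ((ε : ℂ) * v (1, 0) / 2) * s2
        refine ⟨v (0, 0) / (ε : ℂ), PiLp.ext fun p => ?_⟩
        rcases p with ⟨i, j⟩
        fin_cases i <;> fin_cases j <;>
          · simp [ketE, Prod.ext_iff, smul_eq_mul, h2, hd, hkey]
            try ring
            try field_simp
      · rw [Submodule.span_singleton_le_iff_mem, mem_orth_triple]
        refine ⟨?_, ?_, ?_⟩ <;>
          · simp only [inner_expand]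
            simp [ketE, Prod.ext_iff, smul_eq_mul, Complex.conj_ofReal]
            try linear_combination (-(ε : ℂ)) * s2
    · rintro ⟨u, w, h⟩
      have h00 := h (0, 0)
      have h01 := h (0, 1)
      have h10 := h (1, 0)
      have h11 := h (1, 1)
      simp [ketE, Prod.ext_iff, smul_eq_mul] at h00 h01 h10 h11
      have : (ε : ℂ) * (ε : ℂ) = 0 := by
        have key : u 0 * w 0 * (u 1 * w 1) = u 0 * w 1 * (u 1 * w 0) := by ring
        rw [← h00, ← h11] at key
        rw [key]
        rcases h01 with h01 | h01 <;> simp [h01] at h10 ⊢ <;> simp [h10]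
      exact hε' (by simpa using mul_self_eq_zero.mp this)
  · constructor
    · apply le_antisymm
      · intro v hv
        rw [mem_orth_triple] at hv
        obtain ⟨h1, h2, h3⟩ := hv
        simp only [inner_expand] at h1 h2 h3
        simp [ketE, Prod.ext_iff] at h1 h2 h3
        rw [Submodule.mem_span_singleton]
        have ha : v (0, 0) = 0 := by linear_combination (h1 + h3) / 2
        have hd : v (1, 1) = 0 := by linear_combination (h1 - h3) / 2
        refine ⟨v (1, 0), PiLp.ext fun p => ?_⟩
        rcases p with ⟨i, j⟩
        fin_cases i <;> fin_cases j <;>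
          simp [ketE, Prod.ext_iff, smul_eq_mul, h2, ha, hd]
      · rw [Submodule.span_singleton_le_iff_mem, mem_orth_triple]
        refine ⟨?_, ?_, ?_⟩ <;>
          · simp only [inner_expand]
            simp [ketE, Prod.ext_iff]
    · refine ⟨fun i => if i = 1 then 1 else 0, fun j => if j = 0 then 1 else 0, ?_⟩
      rintro ⟨i, j⟩
      fin_cases i <;> fin_cases j <;> simp [ketE, Prod.ext_iff]
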